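/- Let n ∈ ℕ with μ(n) ≤ k, where μ(n) = min{h : α(n+h) ≤ h}. Then there exists exactly one minimal spike of degree n in 𝔽₂[t₁,…,t_k], i.e. exactly one monomial t₁^{2^{d₁}−1} t₂^{2^{d₂}−1} ⋯ t_k^{2^{d_k}−1} with d₁ ≥ d₂ ≥ ⋯ ≥ d_k ≥ 0, Σ(2^{d_i}−1) = n, satisfying d₁ > d₂ > ⋯ > d_{r−1} ≥ d_r > 0 and d_j = 0 for j > r (where r is the number of nonzero d_i). -/
import Mathlib


/-- Number of ones in the binary expansion. -/
def alpha (n : ℕ) : ℕ := (Nat.digits 2 n).sum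

/-- μ(n) = min {h : α(n+h) ≤ h}. -/
noncomputable def mu (n : ℕ) : ℕ := sInf {h : ℕ | alpha (n + h) ≤ h}

/-- `d : Fin k → ℕ` gives the exponents `2^{dᵢ} - 1` of a minimal spike: the `dᵢ` are
weakly decreasing, and strictly decreasing among consecutive entries as long as the
entry two steps further is still nonzero (so `d₁ > ⋯ > d_{r-1} ≥ d_r > 0 = d_{r+1} = ⋯`). -/
def IsMinimalSpikeExponents (k : ℕ) (d : Fin k → ℕ) : Prop :=
  Antitone d ∧
  ∀ i j l : Fin k, (i : ℕ) + 1 = (j : ℕ) → (j : ℕ) + 1 = (l : ℕ) → 0 < d l → d j < d i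

/-! ### alpha lemmas -/

lemma alpha_zero : alpha 0 = 0 := by simp [alpha]

lemma alpha_def {n : ℕ} (h : n ≠ 0) : alpha n = n % 2 + alpha (n / 2) := by
  unfold alpha
  rw [Nat.digits_def' (by norm_num : (1:ℕ) < 2) (Nat.pos_of_ne_zero h)]
  simp

lemma alpha_two_mul (m : ℕ) : alpha (2 * m) = alpha m := by
  rcases Nat.eq_zero_or_pos m with h | h
  · simp [h]
  · rw [alpha_def (by omega)]
    simp [Nat.mul_div_cancel_left, Nat.mul_mod_right]

lemma alpha_two_mul_add_one (m : ℕ) : alpha (2 * m + 1) = alpha m + 1 := by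
  rw [alpha_def (by omega)]
  have h1 : (2 * m + 1) % 2 = 1 := by omega
  have h2 : (2 * m + 1) / 2 = m := by omega
  rw [h1, h2]; omega

lemma alpha_le (n : ℕ) : alpha n ≤ n := by
  induction n using Nat.strong_induction_on with
  | _ n ih =>
    rcases Nat.eq_zero_or_pos n with h | h
    · simp [h, alpha_zero]
    · rw [alpha_def (by omega)]
      have := ih (n / 2) (by omega)
      omega

lemma alpha_pos {n : ℕ} (h : n ≠ 0) : 0 < alpha n := by
  induction n using Nat.strong_induction_on with
  | _ n ih =>
    rw [alpha_def h]
    rcases Nat.eq_zero_or_pos (n % 2) with h1 | h1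
    · have hd : n / 2 ≠ 0 := by omega
      have := ih (n / 2) (by omega) hd
      omega
    · omega

lemma alpha_mul_pow_add (d : ℕ) : ∀ b r : ℕ, r < 2 ^ d →
    alpha (2 ^ d * b + r) = alpha b + alpha r := by
  induction d with
  | zero =>
    intro b r hr
    interval_cases r
    simp [alpha_zero]
  | succ d ih =>
    intro b r hr
    have hr2 : r / 2 < 2 ^ d := by
      have : r < 2 ^ d * 2 := by rw [← pow_succ]; exact hr
      omega
    have key : 2 ^ (d + 1) * b + r = 2 * (2 ^ d * b + r / 2) + r % 2 := by
      have h2 : 2 ^ (d + 1) * b = 2 * (2 ^ d * b) := by ring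
      omega
    rcases Nat.even_or_odd r with ⟨m, hm⟩ | ⟨m, hm⟩
    · have hrm : r % 2 = 0 := by omega
      have hrd : r / 2 = m := by omega
      rw [key, hrm, hrd, add_zero, alpha_two_mul, ih b m (by omega), hm]
      have : m + m = 2 * m := by ring
      rw [this, alpha_two_mul]
    · have hrm : r % 2 = 1 := by omega
      have hrd : r / 2 = m := by omega
      rw [key, hrm, hrd, alpha_two_mul_add_one, ih b m (by omega), hm,
        alpha_two_mul_add_one]
      omega

lemma alpha_succ_le (n : ℕ) : alpha (n + 1) ≤ alpha n + 1 := by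
  induction n using Nat.strong_induction_on with
  | _ n ih =>
    rcases Nat.even_or_odd n with ⟨m, hm⟩ | ⟨m, hm⟩
    · have : n = 2 * m := by omega
      subst this
      rw [alpha_two_mul, alpha_two_mul_add_one]
    · have : n = 2 * m + 1 := by omega
      subst this
      have h1 : 2 * m + 1 + 1 = 2 * (m + 1) := by ring
      rw [h1, alpha_two_mul, alpha_two_mul_add_one]
      have := ih m (by omega)
      omega

/-- the defining set of `mu` is upward closed, so `mu n ≤ k` gives `alpha (n+k) ≤ k`. -/
lemma alpha_add_le_of_mu_le {n k : ℕ} (h : mu n ≤ k) : alpha (n + k) ≤ k := by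
  have hne : {h : ℕ | alpha (n + h) ≤ h}.Nonempty := by
    refine ⟨n, ?_⟩
    simp only [Set.mem_setOf_eq]
    have : n + n = 2 * n := by ring
    rw [this, alpha_two_mul]
    exact alpha_le n
  have hmem : alpha (n + mu n) ≤ mu n := Nat.sInf_mem hne
  revert hmem
  refine Nat.le_induction (fun h => h) ?_ k h
  intro m _ ih hm
  have h1 := ih hm
  have h2 : n + (m + 1) = (n + m) + 1 := by ring
  rw [h2]
  have := alpha_succ_le (n + m)
  omega

/-! ### greedy construction -/

/-- exponent of the greedy spike term for `n` : largest `e` with `2^e - 1 ≤ n`. -/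
def ee (n : ℕ) : ℕ := Nat.log 2 (n + 1)

/-- remove the greedy spike term. -/
def TT (n : ℕ) : ℕ := n + 1 - 2 ^ ee n

/-- the greedy exponent sequence. -/
def gd (n i : ℕ) : ℕ := ee (TT^[i] n)

lemma pow_ee_le (n : ℕ) : 2 ^ ee n ≤ n + 1 :=
  Nat.pow_log_le_self 2 (Nat.succ_ne_zero n)

lemma lt_pow_ee (n : ℕ) : n + 1 < 2 ^ (ee n + 1) :=
  Nat.lt_pow_succ_log_self (by norm_num) _

lemma TT_add (n : ℕ) : TT n + 2 ^ ee n = n + 1 := by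
  have := pow_ee_le n
  unfold TT; omega

lemma TT_lt (n : ℕ) : TT n + 1 ≤ 2 ^ ee n := by
  have h1 := TT_add n
  have h2 := lt_pow_ee n
  have h3 : 2 ^ (ee n + 1) = 2 ^ ee n + 2 ^ ee n := by ring
  omega

lemma ee_TT_le (n : ℕ) : ee (TT n) ≤ ee n := by
  have h1 : TT n + 1 ≤ 2 ^ ee n := TT_lt n
  have := Nat.log_mono_right (b := 2) h1
  rwa [Nat.log_pow (by norm_num)] at this

lemma ee_eq_zero : ee 0 = 0 := by
  simp [ee, Nat.log_one_right]

lemma TT_zero : TT 0 = 0 := by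
  simp [TT, ee_eq_zero]

lemma ee_pos_ne {x : ℕ} (h : 0 < ee x) : x ≠ 0 := by
  intro hx; rw [hx, ee_eq_zero] at h; omega

lemma ee_TT_lt {a : ℕ} (h : TT (TT a) ≠ 0) : ee (TT a) < ee a := by
  by_contra hcon
  have heq : ee (TT a) = ee a := le_antisymm (ee_TT_le a) (by omega)
  have h1 : 2 ^ ee (TT a) ≤ TT a + 1 := pow_ee_le (TT a)
  have h2 : TT a + 1 ≤ 2 ^ ee a := TT_lt a
  rw [heq] at h1
  have h3 : TT a + 1 = 2 ^ ee (TT a) := by rw [heq]; omega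
  have hdef : TT (TT a) = TT a + 1 - 2 ^ ee (TT a) := rfl
  exact h (by omega)

/-- key step: the greedy step preserves expressibility. -/
lemma key_step {n k : ℕ} (_hn : n ≠ 0) (h : alpha (n + (k + 1)) ≤ k + 1) :
    alpha (TT n + k) ≤ k := by
  obtain ⟨d, hd⟩ : ∃ d, ee n = d := ⟨_, rfl⟩
  obtain ⟨N, hN⟩ : ∃ N, n + (k + 1) = N := ⟨_, rfl⟩
  rw [hN] at h
  have h2d : 2 ^ d ≤ n + 1 := by rw [← hd]; exact pow_ee_le n
  have hlt : n + 1 < 2 ^ (d + 1) := by rw [← hd]; exact lt_pow_ee n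
  have hP : 2 ^ (d + 1) = 2 ^ d + 2 ^ d := by ring
  have hTa : TT n + 2 ^ d = n + 1 := by rw [← hd]; exact TT_add n
  have hTk : TT n + k = N - 2 ^ d := by omega
  obtain ⟨q, r, hdm, hrlt⟩ : ∃ q r, 2 ^ (d + 1) * q + r = N ∧ r < 2 ^ (d + 1) :=
    ⟨N / 2 ^ (d + 1), N % 2 ^ (d + 1), Nat.div_add_mod N (2 ^ (d + 1)),
      Nat.mod_lt _ (by positivity)⟩
  have hNa : alpha N = alpha q + alpha r := by
    rw [← hdm]; exact alpha_mul_pow_add (d + 1) q r hrlt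
  rcases le_or_gt (2 ^ d) r with hb | hb
  · -- bit d of N is set
    obtain ⟨r', hr'⟩ : ∃ r', r = 2 ^ d + r' := ⟨r - 2 ^ d, by omega⟩
    have hr'lt : r' < 2 ^ d := by omega
    have e1 : N - 2 ^ d = 2 ^ (d + 1) * q + r' := by omega
    have e2 : alpha (N - 2 ^ d) = alpha q + alpha r' := by
      rw [e1]; exact alpha_mul_pow_add (d + 1) q r' (by omega)
    have e3 : alpha r = 1 + alpha r' := by
      have hre : r = 2 ^ d * 1 + r' := by omega
      rw [hre, alpha_mul_pow_add d 1 r' hr'lt]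
      have h1 : alpha 1 = 1 := by
        have := alpha_two_mul_add_one 0
        simpa [alpha_zero] using this
      omega
    rw [hTk, e2]
    omega
  · -- bit d of N is clear
    have hq1 : 1 ≤ q := by
      by_contra hq0
      have hq00 : q = 0 := by omega
      rw [hq00] at hdm
      omega
    obtain ⟨q', hq'⟩ : ∃ q', q = q' + 1 := ⟨q - 1, by omega⟩
    subst hq'
    have hexpand : 2 ^ (d + 1) * (q' + 1) = 2 ^ (d + 1) * q' + 2 ^ (d + 1) := by ring
    have e1 : N - 2 ^ d = 2 ^ d * (2 * q' + 1) + r := by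
      have hh : 2 ^ d * (2 * q' + 1) = 2 ^ (d + 1) * q' + 2 ^ d := by ring
      omega
    have e2 : alpha (N - 2 ^ d) = alpha (2 * q' + 1) + alpha r := by
      rw [e1]; exact alpha_mul_pow_add d _ r hb
    have e3 : alpha (2 * q' + 1) = alpha q' + 1 := alpha_two_mul_add_one q'
    have e4 : alpha q' ≤ q' := alpha_le q'
    have e5 : alpha r ≤ r := alpha_le r
    have e6 : 2 ^ (d + 1) * q' + r + 1 ≤ k := by omega
    have e7 : q' ≤ 2 ^ (d + 1) * q' := Nat.le_mul_of_pos_left q' (by positivity)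
    rw [hTk, e2, e3]
    omega

lemma TT_iter_zero : ∀ k n : ℕ, alpha (n + k) ≤ k → TT^[k] n = 0 := by
  intro k
  induction k with
  | zero =>
    intro n h
    simp only [Function.iterate_zero, id_eq]
    by_contra hn
    have := alpha_pos (n := n + 0) (by omega)
    omega
  | succ k ih =>
    intro n h
    rcases Nat.eq_zero_or_pos n with h0 | h0
    · rw [h0]; exact Function.iterate_fixed TT_zero (k + 1)
    · rw [Function.iterate_succ_apply]
      exact ih (TT n) (key_step (by omega : n ≠ 0) h)

lemma gd_succ (n i : ℕ) : gd n (i + 1) = gd (TT n) i := by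
  unfold gd
  rw [Function.iterate_succ_apply]

lemma gd_zero_eq (n : ℕ) : gd n 0 = ee n := rfl

lemma sum_gd : ∀ k n : ℕ, TT^[k] n = 0 →
    ∑ i ∈ Finset.range k, (2 ^ gd n i - 1) = n := by
  intro k
  induction k with
  | zero => intro n h; simpa using h.symm
  | succ k ih =>
    intro n h
    rw [Finset.sum_range_succ']
    have h1 : ∀ i, gd n (i + 1) = gd (TT n) i := gd_succ n
    have h2 : ∑ i ∈ Finset.range k, (2 ^ gd n (i + 1) - 1)
        = ∑ i ∈ Finset.range k, (2 ^ gd (TT n) i - 1) := by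
      apply Finset.sum_congr rfl
      intro i _
      rw [h1]
    rw [h2, ih (TT n) (by rwa [Function.iterate_succ_apply] at h)]
    have h3 := TT_add n
    have h4 : 1 ≤ 2 ^ ee n := Nat.one_le_two_pow
    rw [gd_zero_eq]
    omega

lemma gd_anti (n : ℕ) : Antitone (gd n) := by
  apply antitone_nat_of_succ_le
  intro i
  unfold gd
  rw [Function.iterate_succ_apply']
  exact ee_TT_le _

lemma gd_strict (n i : ℕ) (h : 0 < gd n (i + 2)) : gd n (i + 1) < gd n i := by
  have h2 : TT^[i + 2] n ≠ 0 := ee_pos_ne h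
  have h3 : TT^[i + 2] n = TT (TT (TT^[i] n)) := by
    rw [show i + 2 = (i + 1) + 1 from rfl, Function.iterate_succ_apply',
      Function.iterate_succ_apply']
  rw [h3] at h2
  have := ee_TT_lt h2
  unfold gd
  rwa [show i + 1 = i + 1 from rfl, Function.iterate_succ_apply' TT i]

/-! ### uniqueness -/

/-- sum bound for valid exponent sequences. -/
lemma sum_bound : ∀ k : ℕ, ∀ D : ℕ → ℕ,
    (∀ i j, i ≤ j → D j ≤ D i) →
    (∀ i, 0 < D (i + 2) → D (i + 1) < D i) →
    ∑ i ∈ Finset.range (k + 1), (2 ^ D i - 1) ≤ 2 ^ (D 0 + 1) - 2 := by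
  intro k
  induction k with
  | zero =>
    intro D _ _
    simp only [zero_add, Finset.sum_range_one]
    have h1 : 1 ≤ 2 ^ D 0 := Nat.one_le_two_pow
    have h2 : 2 ^ (D 0 + 1) = 2 ^ D 0 + 2 ^ D 0 := by ring
    omega
  | succ k ih =>
    intro D hanti hstrict
    rw [Finset.sum_range_succ']
    set D' := fun i => D (i + 1) with hD'
    have hanti' : ∀ i j, i ≤ j → D' j ≤ D' i := fun i j hij =>
      hanti (i + 1) (j + 1) (by omega)
    have hstrict' : ∀ i, 0 < D' (i + 2) → D' (i + 1) < D' i := fun i h =>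
      hstrict (i + 1) h
    have hIH := ih D' hanti' hstrict'
    have hsum : ∑ i ∈ Finset.range (k + 1), (2 ^ D (i + 1) - 1)
        = ∑ i ∈ Finset.range (k + 1), (2 ^ D' i - 1) := rfl
    rw [hsum]
    have h1 : 1 ≤ 2 ^ D 0 := Nat.one_le_two_pow
    have hD'0 : D' 0 = D 1 := rfl
    have hpow : 2 ^ (D 0 + 1) = 2 ^ D 0 + 2 ^ D 0 := by ring
    rcases Nat.eq_zero_or_pos (D 2) with h2 | h2
    · -- all entries from index 2 on are zero
      have hzero : ∀ i, 2 ≤ i → D i = 0 := by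
        intro i hi
        have := hanti 2 i hi
        omega
      have hS' : ∑ i ∈ Finset.range (k + 1), (2 ^ D' i - 1) = 2 ^ D 1 - 1 := by
        rw [Finset.sum_range_succ']
        have hz : ∑ i ∈ Finset.range k, (2 ^ D' (i + 1) - 1) = 0 := by
          apply Finset.sum_eq_zero
          intro i _
          have hzz : D' (i + 1) = 0 := hzero (i + 2) (by omega)
          rw [hzz]
          norm_num
        rw [hz, zero_add]
      rw [hS']
      have hle : D 1 ≤ D 0 := hanti 0 1 (by omega)
      have : 2 ^ D 1 ≤ 2 ^ D 0 := Nat.pow_le_pow_right (by norm_num) hle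
      omega
    · have hlt : D 1 < D 0 := hstrict 0 h2
      have : 2 ^ (D 1 + 1) ≤ 2 ^ D 0 := Nat.pow_le_pow_right (by norm_num) hlt
      rw [hD'0] at hIH
      omega

lemma uniq : ∀ k : ℕ, ∀ n : ℕ, ∀ D : ℕ → ℕ,
    (∀ i j, i ≤ j → D j ≤ D i) →
    (∀ i, 0 < D (i + 2) → D (i + 1) < D i) →
    (∑ i ∈ Finset.range k, (2 ^ D i - 1)) = n →
    ∀ i < k, D i = gd n i := by
  intro k
  induction k with
  | zero => intro n D _ _ _ i hi; omega
  | succ k ih =>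
    intro n D hanti hstrict hsum
    have h1 : 1 ≤ 2 ^ D 0 := Nat.one_le_two_pow
    -- lower bound : 2^(D 0) - 1 ≤ n
    have hlow : 2 ^ D 0 - 1 ≤ n := by
      rw [← hsum, Finset.sum_range_succ']
      omega
    -- upper bound from sum_bound
    have hup : n ≤ 2 ^ (D 0 + 1) - 2 := by
      rw [← hsum]
      exact sum_bound k D hanti hstrict
    -- D 0 = ee n
    have hD0 : D 0 = ee n := by
      have hge : D 0 ≤ ee n := by
        have h2 : 2 ^ D 0 ≤ n + 1 := by omega
        have h4 := Nat.log_mono_right (b := 2) h2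
        rw [Nat.log_pow (by norm_num)] at h4
        exact h4
      have hle : ee n ≤ D 0 := by
        have h2 : n + 1 < 2 ^ (D 0 + 1) := by
          have h3 : 2 ≤ 2 ^ (D 0 + 1) := by
            calc 2 = 2 ^ 1 := rfl
            _ ≤ 2 ^ (D 0 + 1) := Nat.pow_le_pow_right (by norm_num) (by omega)
          omega
        have h5 : Nat.log 2 (n + 1) < D 0 + 1 :=
          Nat.log_lt_of_lt_pow (Nat.succ_ne_zero n) h2
        exact Nat.lt_succ_iff.mp h5
      omega
    -- tail
    set D' := fun i => D (i + 1) with hD'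
    have hanti' : ∀ i j, i ≤ j → D' j ≤ D' i := fun i j hij =>
      hanti (i + 1) (j + 1) (by omega)
    have hstrict' : ∀ i, 0 < D' (i + 2) → D' (i + 1) < D' i := fun i h =>
      hstrict (i + 1) h
    have hsum' : ∑ i ∈ Finset.range k, (2 ^ D' i - 1) = TT n := by
      have h2 : ∑ i ∈ Finset.range k, (2 ^ D' i - 1) + (2 ^ D 0 - 1) = n := by
        rw [← hsum, Finset.sum_range_succ']
      have h3 := TT_add n
      rw [← hD0] at h3
      omega
    have hIH := ih (TT n) D' hanti' hstrict' hsum'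
    intro i hi
    rcases Nat.eq_zero_or_pos i with h0 | h0
    · rw [h0, gd_zero_eq, hD0]
    · obtain ⟨i', rfl⟩ : ∃ i', i = i' + 1 := ⟨i - 1, by omega⟩
      rw [gd_succ]
      exact hIH i' (by omega)

/-- If `μ(n) ≤ k`, there is exactly one minimal spike of degree `n` in `𝔽₂[t₁,…,t_k]`. -/
theorem unique_minimal_spike (k n : ℕ) (h : mu n ≤ k) :
    ∃! d : Fin k → ℕ,
      IsMinimalSpikeExponents k d ∧ (∑ i, (2 ^ d i - 1)) = n := by
  have halpha : alpha (n + k) ≤ k := alpha_add_le_of_mu_le h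
  have hT : TT^[k] n = 0 := TT_iter_zero k n halpha
  refine ⟨fun i => gd n i, ⟨⟨?_, ?_⟩, ?_⟩, ?_⟩
  · -- antitone
    intro i j hij
    exact gd_anti n (show (i : ℕ) ≤ (j : ℕ) from hij)
  · -- strict
    intro i j l hij hjl hl
    have hl2 : (l : ℕ) = (i : ℕ) + 2 := by omega
    have : 0 < gd n ((i : ℕ) + 2) := by rw [← hl2]; exact hl
    have hfin := gd_strict n ↑i this
    show gd n ↑j < gd n ↑i
    rw [← hij]
    exact hfin
  · -- sum
    rw [show (∑ i : Fin k, (2 ^ gd n ↑i - 1))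
        = ∑ i ∈ Finset.range k, (2 ^ gd n i - 1) from
      Fin.sum_univ_eq_sum_range (fun i => 2 ^ gd n i - 1) k]
    exact sum_gd k n hT
  · -- uniqueness
    rintro d ⟨⟨hanti, hstrict⟩, hsum⟩
    set D : ℕ → ℕ := fun i => if h : i < k then d ⟨i, h⟩ else 0 with hD
    have hDanti : ∀ i j, i ≤ j → D j ≤ D i := by
      intro i j hij
      by_cases hik : i < k
      · by_cases hjk : j < k
        · simp only [hD, dif_pos hik, dif_pos hjk]
          exact hanti (Fin.mk_le_mk.mpr hij)
        · simp only [hD, dif_pos hik, dif_neg hjk]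
          omega
      · have hjk : ¬ j < k := by omega
        simp only [hD, dif_neg hik, dif_neg hjk]
        exact le_rfl
    have hDstrict : ∀ i, 0 < D (i + 2) → D (i + 1) < D i := by
      intro i hpos
      have hik2 : i + 2 < k := by
        by_contra hcon
        simp only [hD, dif_neg hcon] at hpos
        omega
      have hik1 : i + 1 < k := by omega
      have hik : i < k := by omega
      simp only [hD, dif_pos hik2] at hpos
      simp only [hD, dif_pos hik, dif_pos hik1]
      exact hstrict ⟨i, hik⟩ ⟨i + 1, hik1⟩ ⟨i + 2, hik2⟩ rfl rfl hpos
    have hDsum : ∑ i ∈ Finset.range k, (2 ^ D i - 1) = n := by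
      rw [← Fin.sum_univ_eq_sum_range (fun i => 2 ^ D i - 1) k, ← hsum]
      apply Finset.sum_congr rfl
      intro i _
      have : D ↑i = d i := by
        simp only [hD, dif_pos i.isLt, Fin.eta]
      rw [this]
    have huniq := uniq k n D hDanti hDstrict hDsum
    funext i
    have := huniq ↑i i.isLt
    have hDi : D ↑i = d i := by
      simp only [hD, dif_pos i.isLt, Fin.eta]
    rw [← hDi, this]
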